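/- Let T be a Boolean decision tree over a finite set X of Boolean features satisfying the read-once property (on no root-to-leaf path do two internal nodes carry the same feature). Let f : X → Bool be an entity and x ∈ X. Then x is necessary for the prediction T(f) (i.e., x belongs to every sufficient reason for T(f)) if and only if the root-to-leaf path traversed when T evaluates f contains an internal node labeled x whose two subtrees evaluate to different values on f. -/

import Mathlib

/-- A Boolean decision tree over Boolean features `X`: leaves carry a Boolean label,
internal nodes carry a feature together with the subtree followed when the feature is
`true` and the subtree followed when it is `false`. -/
inductive DTree (X : Type*) where
  | leaf : Bool → DTree X
  | node : X → DTree X → DTree X → DTree X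

namespace DTree

/-- Evaluation of a decision tree on an entity `f : X → Bool`. -/
def eval {X : Type*} : DTree X → (X → Bool) → Bool
  | .leaf b, _ => b
  | .node x t₁ t₀, f => if f x then t₁.eval f else t₀.eval f

/-- The set of features appearing in a decision tree. -/
def vars {X : Type*} : DTree X → Set X
  | .leaf _ => ∅
  | .node x t₁ t₀ => {x} ∪ t₁.vars ∪ t₀.vars

/-- The read-once property: on no root-to-leaf path do two internal nodes carry the same
feature, i.e. the feature of each internal node does not reappear in its subtrees. -/
def ReadOnce {X : Type*} : DTree X → Prop
  | .leaf _ => True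
  | .node x t₁ t₀ => x ∉ t₁.vars ∧ x ∉ t₀.vars ∧ t₁.ReadOnce ∧ t₀.ReadOnce

/-- The root-to-leaf path traversed when evaluating `f` contains an internal node
labeled `x` whose two subtrees evaluate to different values on `f`. -/
def PathWitness {X : Type*} : DTree X → (X → Bool) → X → Prop
  | .leaf _, _, _ => False
  | .node y t₁ t₀, f, x =>
      (y = x ∧ t₁.eval f ≠ t₀.eval f) ∨
        (if f y then t₁.PathWitness f x else t₀.PathWitness f x)

end DTree

/-- `S` is a reason for the prediction `M f` of a Boolean model over Boolean features:
every entity agreeing with `f` on `S` gets the same prediction. -/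
def IsReason {X : Type*} (M : (X → Bool) → Bool) (f : X → Bool) (S : Set X) : Prop :=
  ∀ f' : X → Bool, (∀ x ∈ S, f' x = f x) → M f' = M f

/-- `S` is a sufficient reason: a reason that is minimal with respect to being a reason. -/
def IsSufficientReason {X : Type*} (M : (X → Bool) → Bool) (f : X → Bool) (S : Set X) :
    Prop :=
  IsReason M f S ∧ ∀ S' ⊂ S, ¬ IsReason M f S'

/-! For any Boolean model on finitely many features, `x` lies in every sufficient reason iff
flipping `x` alone changes the prediction: otherwise `{x}ᶜ` is a reason, and it contains a
sufficient one. In a read-once tree the flip is passed down the path of `f` until it reaches a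
node labelled `x`; there it only switches branches, because read-once keeps `x` out of both
subtrees, so it changes the prediction iff the two subtrees disagree on `f`. -/

open Function

section Reasons

variable {X : Type*} {M : (X → Bool) → Bool} {f : X → Bool} {S : Set X}

theorem isSufficientReason_iff_minimal : IsSufficientReason M f S ↔ Minimal (IsReason M f) S :=
  Set.minimal_iff_forall_ssubset.symm

theorem IsReason.mono {S' : Set X} (h : IsReason M f S) (hS : S ⊆ S') : IsReason M f S' :=
  fun f' hf' => h f' fun z hz => hf' z (hS hz)

theorem IsReason.exists_isSufficientReason_subset [Finite X] (h : IsReason M f S) :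
    ∃ S' ⊆ S, IsSufficientReason M f S' := by
  simpa only [isSufficientReason_iff_minimal] using exists_minimal_le_of_wellFoundedLT _ S h

theorem isReason_compl_singleton_iff [DecidableEq X] {x : X} :
    IsReason M f {x}ᶜ ↔ M (update f x (!f x)) = M f := by
  refine ⟨fun h => h _ fun z hz => update_of_ne hz _ _, fun h f' hf' => ?_⟩
  have hf' : f' = update f x (f' x) := eq_update_iff.2 ⟨rfl, hf'⟩
  rcases Bool.eq_or_eq_not (f' x) (f x) with hx | hx
  · rw [hf', hx, update_eq_self]
  · rwa [hf', hx]

theorem forall_isSufficientReason_mem_iff [Finite X] [DecidableEq X] (x : X) :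
    (∀ S, IsSufficientReason M f S → x ∈ S) ↔ M (update f x (!f x)) ≠ M f := by
  rw [← not_iff_not, not_not, ← isReason_compl_singleton_iff]
  push Not
  constructor
  · rintro ⟨S, hS, hxS⟩
    exact hS.1.mono (Set.subset_compl_singleton_iff.2 hxS)
  · intro h
    obtain ⟨S, hSx, hS⟩ := h.exists_isSufficientReason_subset
    exact ⟨S, hS, fun hx => hSx hx rfl⟩

end Reasons

namespace DTree

variable {X : Type*}

theorem eval_congr (T : DTree X) {f f' : X → Bool} (h : ∀ z ∈ T.vars, f' z = f z) :
    T.eval f' = T.eval f := by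
  induction T with
  | leaf b => rfl
  | node y t₁ t₀ ih₁ ih₀ =>
    simp only [eval, h y (.inl (.inl rfl)), ih₁ fun z hz => h z (.inl (.inr hz)),
      ih₀ fun z hz => h z (.inr hz)]

theorem eval_update_of_notMem_vars [DecidableEq X] {T : DTree X} {x : X} (hx : x ∉ T.vars)
    (f : X → Bool) (b : Bool) : T.eval (update f x b) = T.eval f :=
  T.eval_congr fun _ hz => update_of_ne (ne_of_mem_of_not_mem hz hx) _ _

theorem PathWitness.mem_vars {T : DTree X} {f : X → Bool} {x : X} (h : T.PathWitness f x) :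
    x ∈ T.vars := by
  induction T with
  | leaf b => exact h.elim
  | node y t₁ t₀ ih₁ ih₀ =>
    rcases h with ⟨rfl, _⟩ | h
    · exact .inl (.inl rfl)
    · cases hfy : f y <;> simp only [hfy, Bool.false_eq_true, if_true, if_false] at h
      · exact .inr (ih₀ h)
      · exact .inl (.inr (ih₁ h))

theorem ReadOnce.eval_update_ne_iff [DecidableEq X] {T : DTree X} (hT : T.ReadOnce)
    (f : X → Bool) (x : X) : T.eval (update f x (!f x)) ≠ T.eval f ↔ T.PathWitness f x := by
  induction T with
  | leaf b => simp [eval, PathWitness]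
  | node y t₁ t₀ ih₁ ih₀ =>
    obtain ⟨h₁, h₀, hr₁, hr₀⟩ := hT
    by_cases hyx : y = x
    · subst hyx
      have hw₁ : ¬ t₁.PathWitness f y := fun h => h₁ h.mem_vars
      have hw₀ : ¬ t₀.PathWitness f y := fun h => h₀ h.mem_vars
      cases hfy : f y <;>
        simp [eval, PathWitness, hfy, eval_update_of_notMem_vars h₁,
          eval_update_of_notMem_vars h₀, hw₁, hw₀, eq_comm]
    · cases hfy : f y <;> simp [eval, PathWitness, hfy, hyx, ih₁ hr₁, ih₀ hr₀]

end DTree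

/-- For a read-once Boolean decision tree `T`, a feature `x` is necessary for the
prediction `T f` (it belongs to every sufficient reason) iff the path traversed when
evaluating `f` contains a node labeled `x` whose two subtrees evaluate to different
values on `f`. -/
theorem necessary_iff_pathWitness
    {X : Type*} [Finite X] (T : DTree X) (hT : T.ReadOnce) (f : X → Bool) (x : X) :
    (∀ S : Set X, IsSufficientReason T.eval f S → x ∈ S) ↔ T.PathWitness f x := by
  classical
  exact (forall_isSufficientReason_mem_iff x).trans (hT.eval_update_ne_iff f x)
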